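/- Let 1 < p, q < ∞, X = ℓ^p(ℓ^q), and r = max{1/p', 1/q'} where p', q' are conjugate exponents. Then for every finite set A ⊂ ℕ×ℕ and every x ∈ X, Σ_{(j,k)∈A} |x_{j,k}| ≤ |A|^r · ‖x‖. -/

import Mathlib

lemma aux_add_rpow {a b t : ℝ} (ha : 0 ≤ a) (hb : 0 ≤ b) (ht : 1 ≤ t) :
    a ^ t + b ^ t ≤ (a + b) ^ t := by
  lift a to NNReal using ha
  lift b to NNReal using hb
  exact_mod_cast NNReal.add_rpow_le_rpow_add a b ht

lemma aux_sum_rpow {ι : Type*} (s : Finset ι) (f : ι → ℝ) (hf : ∀ i ∈ s, 0 ≤ f i)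
    {t : ℝ} (ht : 1 ≤ t) : ∑ i ∈ s, f i ^ t ≤ (∑ i ∈ s, f i) ^ t := by
  induction s using Finset.cons_induction with
  | empty => simp [Real.zero_rpow (by positivity : t ≠ 0)]
  | cons a s ha ih =>
    rw [Finset.sum_cons, Finset.sum_cons]
    have h1 : 0 ≤ f a := hf a (Finset.mem_cons_self _ _)
    have h2 : ∀ i ∈ s, 0 ≤ f i := fun i hi => hf i (Finset.mem_cons.2 (Or.inr hi))
    calc f a ^ t + ∑ i ∈ s, f i ^ t ≤ f a ^ t + (∑ i ∈ s, f i) ^ t := by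
          exact add_le_add_right (ih h2) _
      _ ≤ (f a + ∑ i ∈ s, f i) ^ t := aux_add_rpow h1 (Finset.sum_nonneg h2) ht

/-- The mixed norm of `ℓ^p(ℓ^q)`. -/
noncomputable def lpqNorm (p q : ℝ) {𝕜 : Type*} [RCLike 𝕜] (x : ℕ → ℕ → 𝕜) : ℝ :=
  (∑' j, (∑' k, ‖x j k‖ ^ q) ^ (p / q)) ^ (1 / p)

/-- For every finite `A ⊂ ℕ×ℕ` and `x ∈ ℓ^p(ℓ^q)`,
`Σ_{(j,k)∈A} |x_{j,k}| ≤ |A|^r ‖x‖` with `r = max{1/p', 1/q'}`. -/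
theorem stmt_6 {𝕜 : Type*} [RCLike 𝕜] (p q p' q' : ℝ) (hp : 1 < p) (hq : 1 < q)
    (hp' : 1 / p + 1 / p' = 1) (hq' : 1 / q + 1 / q' = 1)
    (x : ℕ → ℕ → 𝕜)
    (hx1 : ∀ j, Summable fun k => ‖x j k‖ ^ q)
    (hx2 : Summable fun j => (∑' k, ‖x j k‖ ^ q) ^ (p / q))
    (A : Finset (ℕ × ℕ)) :
    ∑ jk ∈ A, ‖x jk.1 jk.2‖ ≤
      (A.card : ℝ) ^ max (1 / p') (1 / q') * lpqNorm p q x := by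
  have hp0 : (0:ℝ) < p := lt_trans zero_lt_one hp
  have hq0 : (0:ℝ) < q := lt_trans zero_lt_one hq
  have hpq : Real.HolderConjugate p p' := Real.holderConjugate_iff.mpr ⟨hp, by rw [inv_eq_one_div, inv_eq_one_div]; exact hp'⟩
  have hqq : Real.HolderConjugate q q' := Real.holderConjugate_iff.mpr ⟨hq, by rw [inv_eq_one_div, inv_eq_one_div]; exact hq'⟩
  have hp'1 : 1 < p' := (Real.holderConjugate_iff.mp hpq.symm).1
  have hq'1 : 1 < q' := (Real.holderConjugate_iff.mp hqq.symm).1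
  have hp'0 : (0:ℝ) < p' := lt_trans zero_lt_one hp'1
  have hq'0 : (0:ℝ) < q' := lt_trans zero_lt_one hq'1
  set r := max (1/p') (1/q') with hr
  set J := A.image Prod.fst with hJ
  set c : ℕ → ℕ := fun j => (A.filter fun jk => jk.1 = j).card with hc
  set y : ℕ → ℝ := fun j => (∑' k, ‖x j k‖ ^ q) ^ (1/q) with hy
  have htsum_nonneg : ∀ j, 0 ≤ ∑' k, ‖x j k‖ ^ q :=
    fun j => tsum_nonneg fun k => Real.rpow_nonneg (norm_nonneg _) _
  have hy0 : ∀ j, 0 ≤ y j := fun j => Real.rpow_nonneg (htsum_nonneg j) _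
  -- fiber decomposition
  have hsum : ∑ jk ∈ A, ‖x jk.1 jk.2‖
      = ∑ j ∈ J, ∑ jk ∈ A.filter (fun jk => jk.1 = j), ‖x jk.1 jk.2‖ :=
    (Finset.sum_fiberwise_of_maps_to (fun jk h => Finset.mem_image_of_mem _ h) _).symm
  have hcard : ∑ j ∈ J, c j = A.card :=
    (Finset.card_eq_sum_card_fiberwise (fun jk h => Finset.mem_image_of_mem _ h)).symm
  -- Step 1 : Hölder in k
  have step1 : ∀ j, ∑ jk ∈ A.filter (fun jk => jk.1 = j), ‖x jk.1 jk.2‖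
      ≤ (c j : ℝ) ^ (1/q') * y j := by
    intro j
    set B := A.filter (fun jk => jk.1 = j) with hB
    have hmem : ∀ jk ∈ B, jk.1 = j := fun jk h => (Finset.mem_filter.1 h).2
    have hHolder := Real.inner_le_Lp_mul_Lq_of_nonneg (s := B)
      (f := fun jk : ℕ × ℕ => ‖x jk.1 jk.2‖) (g := fun _ => (1:ℝ)) hqq
      (fun i _ => norm_nonneg _) (fun i _ => zero_le_one)
    simp only [mul_one] at hHolder
    have h1 : (∑ _jk ∈ B, (1:ℝ) ^ q') = (B.card : ℝ) := by
      simp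
    rw [h1] at hHolder
    refine hHolder.trans ?_
    rw [mul_comm]
    refine mul_le_mul_of_nonneg_left ?_ (Real.rpow_nonneg (Nat.cast_nonneg _) _)
    have hinj : ∀ a ∈ B, ∀ b ∈ B, Prod.snd a = Prod.snd b → a = b := by
      intro a ha b hb hab
      have := hmem a ha; have := hmem b hb
      ext
      · simp_all
      · exact hab
    have heq : ∑ jk ∈ B, ‖x jk.1 jk.2‖ ^ q = ∑ k ∈ B.image Prod.snd, ‖x j k‖ ^ q := by
      rw [Finset.sum_image hinj]
      exact Finset.sum_congr rfl fun jk hjk => by rw [hmem jk hjk]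
    have hle : ∑ jk ∈ B, ‖x jk.1 jk.2‖ ^ q ≤ ∑' k, ‖x j k‖ ^ q := by
      rw [heq]
      exact Summable.sum_le_tsum _ (fun k _ => Real.rpow_nonneg (norm_nonneg _) _) (hx1 j)
    exact Real.rpow_le_rpow (Finset.sum_nonneg fun i _ => Real.rpow_nonneg (norm_nonneg _) _)
      hle (by positivity)
  -- Step 2 : Hölder in j
  have step2 : ∑ j ∈ J, (c j : ℝ) ^ (1/q') * y j
      ≤ (∑ j ∈ J, ((c j : ℝ) ^ (1/q')) ^ p') ^ (1/p') * (∑ j ∈ J, y j ^ p) ^ (1/p) :=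
    Real.inner_le_Lp_mul_Lq_of_nonneg (s := J)
      (f := fun j => (c j : ℝ) ^ (1/q')) (g := y) hpq.symm
      (fun i _ => Real.rpow_nonneg (by positivity) _) (fun i _ => hy0 i)
  -- Bound the counting factor
  have hcpow : ∀ j, ((c j : ℝ) ^ (1/q')) ^ p' = (c j : ℝ) ^ (p'/q') := by
    intro j
    rw [← Real.rpow_mul (by positivity)]
    congr 1
    ring
  have hcastcard : ∑ j ∈ J, (c j : ℝ) = (A.card : ℝ) := by exact_mod_cast hcard
  have hB1 : (∑ j ∈ J, ((c j : ℝ) ^ (1/q')) ^ p') ^ (1/p') ≤ (A.card : ℝ) ^ r := by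
    simp only [hcpow]
    rcases le_total p' q' with h | h
    · -- p'/q' ≤ 1, r = 1/p'
      have hrr : r = 1/p' := max_eq_left (by
        apply one_div_le_one_div_of_le hp'0 h)
      have hs1 : p'/q' ≤ 1 := (div_le_one hq'0).2 h
      have hsum_le : ∑ j ∈ J, (c j : ℝ) ^ (p'/q') ≤ (A.card : ℝ) := by
        rw [← hcastcard]
        refine Finset.sum_le_sum fun j hj => ?_
        have hcj : (1:ℝ) ≤ (c j : ℝ) := by
          have : 0 < c j := by
            rw [hc, Finset.card_pos]
            obtain ⟨jk, hjk, hjk2⟩ := Finset.mem_image.1 hj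
            exact ⟨jk, Finset.mem_filter.2 ⟨hjk, hjk2⟩⟩
          exact_mod_cast this
        calc (c j : ℝ) ^ (p'/q') ≤ (c j : ℝ) ^ (1:ℝ) :=
              Real.rpow_le_rpow_of_exponent_le hcj hs1
          _ = (c j : ℝ) := Real.rpow_one _
      rw [hrr]
      exact Real.rpow_le_rpow
        (Finset.sum_nonneg fun j _ => Real.rpow_nonneg (by positivity) _)
        hsum_le (le_of_lt (by positivity : (0:ℝ) < 1/p'))
    · -- q' ≤ p', s ≥ 1, r = 1/q'
      have hrr : r = 1/q' := max_eq_right (by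
        apply one_div_le_one_div_of_le hq'0 h)
      have hs1 : 1 ≤ p'/q' := (one_le_div hq'0).2 h
      have hsum_le : ∑ j ∈ J, (c j : ℝ) ^ (p'/q') ≤ (A.card : ℝ) ^ (p'/q') := by
        have h2 := aux_sum_rpow J (fun j => (c j : ℝ)) (fun j _ => by positivity) hs1
        rwa [hcastcard] at h2
      calc (∑ j ∈ J, (c j : ℝ) ^ (p'/q')) ^ (1/p')
          ≤ ((A.card : ℝ) ^ (p'/q')) ^ (1/p') :=
            Real.rpow_le_rpow (Finset.sum_nonneg fun j _ => Real.rpow_nonneg (by positivity) _)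
              hsum_le (by positivity)
        _ = (A.card : ℝ) ^ r := by
            rw [← Real.rpow_mul (by positivity), hrr]
            congr 1
            field_simp
  -- Bound the norm factor
  have hB2 : (∑ j ∈ J, y j ^ p) ^ (1/p) ≤ lpqNorm p q x := by
    have hyp : ∀ j, y j ^ p = (∑' k, ‖x j k‖ ^ q) ^ (p/q) := by
      intro j
      rw [hy, ← Real.rpow_mul (htsum_nonneg j)]
      congr 1
      field_simp
    simp only [hyp]
    unfold lpqNorm
    refine Real.rpow_le_rpow (Finset.sum_nonneg fun j _ => Real.rpow_nonneg (htsum_nonneg j) _)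
      ?_ (by positivity)
    exact Summable.sum_le_tsum _ (fun j _ => Real.rpow_nonneg (htsum_nonneg j) _) hx2
  -- Combine
  calc ∑ jk ∈ A, ‖x jk.1 jk.2‖
      = ∑ j ∈ J, ∑ jk ∈ A.filter (fun jk => jk.1 = j), ‖x jk.1 jk.2‖ := hsum
    _ ≤ ∑ j ∈ J, (c j : ℝ) ^ (1/q') * y j := Finset.sum_le_sum fun j _ => step1 j
    _ ≤ (∑ j ∈ J, ((c j : ℝ) ^ (1/q')) ^ p') ^ (1/p') * (∑ j ∈ J, y j ^ p) ^ (1/p) := step2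
    _ ≤ (A.card : ℝ) ^ r * lpqNorm p q x := by
        apply mul_le_mul hB1 hB2
        · exact Real.rpow_nonneg (Finset.sum_nonneg fun j _ => Real.rpow_nonneg (hy0 j) _) _
        · exact Real.rpow_nonneg (by positivity) _
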